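/- arXiv:1801.08243 — 2 statements merged into one kernel-verified Lean document; each statement's English description precedes it below -/
import Mathlib

section
/- For any finite simple graph G, χ_v(G) equals the maximum, over symmetric real matrices A indexed by the vertices of G satisfying A_ij = 0 whenever i = j or i and j are distinct non-adjacent vertices, A_ij ≥ 0 for all i,j, and I + A positive semidefinite, of the largest eigenvalue of I + A. -/
open Matrix Kronecker

noncomputable section VectorColoring

variable {V α β : Type*}

/-- A vector `t`-coloring of a graph `G`: vectors `p i` with `p i ⬝ᵥ p i = t - 1`
and `p i ⬝ᵥ p j ≤ -1` on edges. -/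
def IsVecColoring [Fintype V] (G : SimpleGraph V) (t : ℝ) {d : ℕ}
    (p : V → Fin d → ℝ) : Prop :=
  (∀ i, p i ⬝ᵥ p i = t - 1) ∧ ∀ i j, G.Adj i j → p i ⬝ᵥ p j ≤ -1

/-- The vector chromatic number: the least `t ≥ 1` admitting a vector `t`-coloring. -/
def vecChrom [Fintype V] (G : SimpleGraph V) : ℝ :=
  sInf {t : ℝ | 1 ≤ t ∧ ∃ (d : ℕ) (p : V → Fin d → ℝ), IsVecColoring G t p}

/-- A strict vector `t`-coloring: `p i ⬝ᵥ p j = -1` on edges. -/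
def IsStrictVecColoring [Fintype V] (G : SimpleGraph V) (t : ℝ) {d : ℕ}
    (p : V → Fin d → ℝ) : Prop :=
  (∀ i, p i ⬝ᵥ p i = t - 1) ∧ ∀ i j, G.Adj i j → p i ⬝ᵥ p j = -1

/-- The strict vector chromatic number. -/
def strictVecChrom [Fintype V] (G : SimpleGraph V) : ℝ :=
  sInf {t : ℝ | 1 ≤ t ∧ ∃ (d : ℕ) (p : V → Fin d → ℝ), IsStrictVecColoring G t p}

/-- The Gram matrix of a family of vectors. -/
def gramMat {d : ℕ} (p : V → Fin d → ℝ) : Matrix V V ℝ :=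
  Matrix.of fun i j => p i ⬝ᵥ p j

/-- `M` is the Gram matrix of an optimal vector coloring of `G`. -/
def IsOptGram [Fintype V] (G : SimpleGraph V) (M : Matrix V V ℝ) : Prop :=
  ∃ (d : ℕ) (p : V → Fin d → ℝ), IsVecColoring G (vecChrom G) p ∧ M = gramMat p

/-- `grk G = rk(G)`: the maximum rank of the Gram matrix of an optimal vector coloring. -/
def grk [Fintype V] (G : SimpleGraph V) : ℕ :=
  sSup {r : ℕ | ∃ M : Matrix V V ℝ, IsOptGram G M ∧ M.rank = r}

/-- The categorical (tensor) product of graphs. -/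
def catProd (G : SimpleGraph α) (H : SimpleGraph β) : SimpleGraph (α × β) where
  Adj x y := G.Adj x.1 y.1 ∧ H.Adj x.2 y.2
  symm := ⟨by intro x y hxy; exact ⟨hxy.1.symm, hxy.2.symm⟩⟩
  loopless := ⟨by intro x hx; exact G.irrefl hx.1⟩

/-- A feasible dual solution for `vecChrom G`. -/
def IsDualSol [Fintype V] (G : SimpleGraph V) (B : Matrix V V ℝ) : Prop :=
  B.PosSemidef ∧ (∀ i j, i ≠ j → ¬ G.Adj i j → B i j = 0) ∧
    (∀ i j, 0 ≤ B i j) ∧ B.trace = 1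

/-- An optimal dual solution for `vecChrom G`: feasible with objective value `vecChrom G`. -/
def IsOptDual [Fintype V] (G : SimpleGraph V) (B : Matrix V V ℝ) : Prop :=
  IsDualSol G B ∧ (∑ i, ∑ j, B i j) = vecChrom G

/-- The all-ones matrix `J`. -/
def allOnes (γ : Type*) : Matrix γ γ ℝ :=
  Matrix.of fun _ _ => 1

/-- The graph `G(B)` of a (symmetric) matrix `B`: distinct `i, j` adjacent iff `B i j ≠ 0`. -/
def matGraph (B : Matrix V V ℝ) : SimpleGraph V where
  Adj i j := i ≠ j ∧ B i j ≠ 0 ∧ B j i ≠ 0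
  symm := ⟨by intro i j hij; exact ⟨hij.1.symm, hij.2.2, hij.2.1⟩⟩
  loopless := ⟨by intro i hi; exact hi.1 rfl⟩

/-- The spanning subgraph `G^p` of edges tight in the vector coloring `p`. -/
def tightSub [Fintype V] (G : SimpleGraph V) {d : ℕ} (p : V → Fin d → ℝ) :
    SimpleGraph V where
  Adj i j := G.Adj i j ∧ p i ⬝ᵥ p j = -1
  symm := ⟨by
    intro i j hij
    exact ⟨hij.1.symm, by rw [dotProduct_comm]; exact hij.2⟩⟩
  loopless := ⟨by intro i hi; exact G.irrefl hi.1⟩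

/-- The skeleton `G^sk`: the spanning subgraph of edges tight in every optimal
vector coloring. -/
def skeleton [Fintype V] (G : SimpleGraph V) : SimpleGraph V where
  Adj i j := G.Adj i j ∧ ∀ (d : ℕ) (p : V → Fin d → ℝ),
      IsVecColoring G (vecChrom G) p → p i ⬝ᵥ p j = -1
  symm := ⟨by
    intro i j hij
    refine ⟨hij.1.symm, fun d p hp => ?_⟩
    rw [dotProduct_comm]
    exact hij.2 d p hp⟩
  loopless := ⟨by intro i hi; exact G.irrefl hi.1⟩

/-- `i` is neighborly in the vector coloring `p`: `-p i` lies in the conical hull of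
the vectors of the `∼_p`-neighbours of `i`. -/
def NeighborlyIn [Fintype V] (G : SimpleGraph V) {d : ℕ} (p : V → Fin d → ℝ)
    (i : V) : Prop :=
  ∃ c : V → ℝ, (∀ j, 0 ≤ c j) ∧ (∀ j, c j ≠ 0 → G.Adj i j ∧ p i ⬝ᵥ p j = -1) ∧
    -p i = ∑ j, c j • p j

/-- `i` is neighborly: neighborly in every optimal vector coloring. -/
def Neighborly [Fintype V] (G : SimpleGraph V) (i : V) : Prop :=
  ∀ (d : ℕ) (p : V → Fin d → ℝ), IsVecColoring G (vecChrom G) p → NeighborlyIn G p i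

/-- `i →_p j`: `-p i = ∑ α_l • p l` over `∼_p`-neighbours `l` of `i`, with `α_j > 0`. -/
def ArrowIn [Fintype V] (G : SimpleGraph V) {d : ℕ} (p : V → Fin d → ℝ)
    (i j : V) : Prop :=
  ∃ c : V → ℝ, (∀ l, 0 ≤ c l) ∧ (∀ l, c l ≠ 0 → G.Adj i l ∧ p i ⬝ᵥ p l = -1) ∧
    0 < c j ∧ -p i = ∑ l, c l • p l

/-- `μ` is an eigenvalue of `M`. -/
def IsEigenvalue [Fintype V] (M : Matrix V V ℝ) (μ : ℝ) : Prop :=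
  ∃ v : V → ℝ, v ≠ 0 ∧ M *ᵥ v = μ • v

/-- `lam` is the largest eigenvalue of `M`. -/
def IsMaxEigenvalue [Fintype V] (M : Matrix V V ℝ) (lam : ℝ) : Prop :=
  IsGreatest {μ : ℝ | IsEigenvalue M μ} lam

/-- `lam` is the smallest eigenvalue of `M`. -/
def IsMinEigenvalue [Fintype V] (M : Matrix V V ℝ) (lam : ℝ) : Prop :=
  IsLeast {μ : ℝ | IsEigenvalue M μ} lam

/-- The eigenspace of `M` for `μ`. -/
def eigSpace [Fintype V] (M : Matrix V V ℝ) (μ : ℝ) : Submodule ℝ (V → ℝ) :=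
  LinearMap.ker (M.mulVecLin - μ • (LinearMap.id : (V → ℝ) →ₗ[ℝ] V → ℝ))

/-- `W` is (the Gram matrix of) a convex combination of vector colorings of `G × H`
induced by `G` and by `H`: `W = a • (M ⊗ J) + b • (J ⊗ N)`. -/
def IsConvexCombInduced [Fintype α] [Fintype β] (G : SimpleGraph α) (H : SimpleGraph β)
    (W : Matrix (α × β) (α × β) ℝ) : Prop :=
  ∃ (a b : ℝ) (M : Matrix α α ℝ) (N : Matrix β β ℝ),
    0 ≤ a ∧ 0 ≤ b ∧ a + b = 1 ∧ IsOptGram G M ∧ IsOptGram H N ∧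
    W = a • (M ⊗ₖ allOnes β) + b • (allOnes α ⊗ₖ N)

end VectorColoring

/-!
Every eigenvalue `μ` of a feasible `1 + A` is at most any `t` admitting a vector `t`-coloring `p`:
for an eigenvector `v` and `u = |v|`, nonnegativity of `A` gives `μ ‖u‖² ≤ uᵀ (1 + A) u`, and the
Schur product of `1 + A` with the Gram matrix of `p` is positive semidefinite, so
`0 ≤ ∑ (1 + A)ᵢⱼ uᵢ uⱼ ⟨pᵢ, pⱼ⟩ ≤ t ‖u‖² - uᵀ (1 + A) u`, as `A` lives on edges, where
`⟨pᵢ, pⱼ⟩ ≤ -1`.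

Conversely, a linear functional `(t, W) ↦ β t + ∑ zᵢⱼ Wᵢⱼ` separating the open orthant
`{t < χ_v(G), W < 0}` from the convex set of constraint residuals of positive semidefinite matrices
is a dual certificate: `z ≥ 0` is supported on the diagonal and the edges, its symmetric part is
positive semidefinite, `β = tr z > 0` and `β χ_v(G) ≤ ∑ zᵢⱼ`. Symmetrised and scaled to trace one it
becomes `B`, and conjugating `B` by the diagonal of the `Bᵢᵢ^(-1/2)` gives `1 + A` whose quadratic
form at the unit vector `(√Bᵢᵢ)ᵢ` is `∑ Bᵢⱼ ≥ χ_v(G)`, so its largest eigenvalue is `χ_v(G)`.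
-/

open Matrix

section QuadraticForms

variable {V : Type*} [Fintype V]

lemma dotProduct_mulVec_eq_sum {R : Type*} [CommSemiring R] (M : Matrix V V R) (x : V → R) :
    x ⬝ᵥ (M *ᵥ x) = ∑ i, ∑ j, M i j * x i * x j := by
  simp only [dotProduct, mulVec, Finset.mul_sum]
  exact Finset.sum_congr rfl fun i _ => Finset.sum_congr rfl fun j _ => by ring

lemma dotProduct_mulVec_le_abs {M : Matrix V V ℝ} (hM : ∀ i j, 0 ≤ M i j) (x : V → ℝ) :
    x ⬝ᵥ (M *ᵥ x) ≤ |x| ⬝ᵥ (M *ᵥ |x|) := by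
  simp only [dotProduct_mulVec_eq_sum, Pi.abs_apply, mul_assoc, ← abs_mul]
  exact Finset.sum_le_sum fun i _ => Finset.sum_le_sum fun j _ =>
    mul_le_mul_of_nonneg_left (le_abs_self _) (hM i j)

lemma posSemidef_gramMat {d : ℕ} (p : V → Fin d → ℝ) : (gramMat p).PosSemidef := by
  have h : gramMat p = of p * (of p)ᴴ := by
    ext i j
    simp [gramMat, mul_apply, dotProduct]
  rw [h]
  exact posSemidef_self_mul_conjTranspose _

lemma Matrix.PosSemidef.apply_eq_zero_of_diag_eq_zero [DecidableEq V] {B : Matrix V V ℝ}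
    (hB : B.PosSemidef) {i : V} (hi : B i i = 0) (j : V) : B j i = 0 := by
  have h : B *ᵥ Pi.single i 1 = 0 := (hB.dotProduct_mulVec_zero_iff _).1 (by simp [hi])
  simpa [mulVec_single_one] using congrFun h j

open scoped MatrixOrder in
lemma Matrix.IsHermitian.dotProduct_mulVec_le [DecidableEq V] {S : Matrix V V ℝ}
    (hS : S.IsHermitian) {c : ℝ} (hc : ∀ i, hS.eigenvalues i ≤ c) (x : V → ℝ) :
    x ⬝ᵥ (S *ᵥ x) ≤ c * (x ⬝ᵥ x) := by
  have hle : S ≤ algebraMap ℝ (Matrix V V ℝ) c := by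
    refine le_algebraMap_of_spectrum_le (fun μ hμ => ?_) hS.isSelfAdjoint
    obtain ⟨i, rfl⟩ := hS.spectrum_real_eq_range_eigenvalues ▸ hμ
    exact hc i
  have := (Matrix.le_iff.mp hle).dotProduct_mulVec_nonneg x
  rw [Algebra.algebraMap_eq_smul_one] at this
  simpa [sub_mulVec, smul_mulVec] using this

lemma Matrix.IsHermitian.exists_isMaxEigenvalue [DecidableEq V] [Nonempty V] {S : Matrix V V ℝ}
    (hS : S.IsHermitian) :
    ∃ lam, IsMaxEigenvalue S lam ∧ ∀ x : V → ℝ, x ⬝ᵥ (S *ᵥ x) ≤ lam * (x ⬝ᵥ x) := by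
  obtain ⟨i₀, -, hi₀⟩ := Finset.exists_max_image Finset.univ hS.eigenvalues Finset.univ_nonempty
  have hray := hS.dotProduct_mulVec_le fun i => hi₀ i (Finset.mem_univ i)
  refine ⟨hS.eigenvalues i₀, ⟨⟨_, ?_, hS.mulVec_eigenvectorBasis i₀⟩, ?_⟩, hray⟩
  · simpa using hS.eigenvectorBasis.orthonormal.ne_zero i₀
  · rintro μ ⟨v, hv, hμ⟩
    have h := hray v
    rw [hμ, dotProduct_smul, smul_eq_mul] at h
    exact le_of_mul_le_mul_right h (by simpa using dotProduct_star_self_pos_iff.2 hv)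

end QuadraticForms

section VectorColorings

variable {V : Type*} [Fintype V] {G : SimpleGraph V}

lemma exists_isVecColoring_of_posSemidef {M : Matrix V V ℝ} {t : ℝ} (hM : M.PosSemidef)
    (hdiag : ∀ i, M i i ≤ t - 1) (hadj : ∀ i j, G.Adj i j → M i j ≤ -1) :
    ∃ (d : ℕ) (p : V → Fin d → ℝ), IsVecColoring G t p := by
  classical
  set N := M + diagonal fun i => t - 1 - M i i
  have hN : N.PosSemidef := hM.add (PosSemidef.diagonal fun i => sub_nonneg.2 (hdiag i))
  obtain ⟨d, v, hv⟩ := posSemidef_iff_eq_sum_vecMulVec.1 hN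
  have hdot : ∀ i j, (fun k => v k i) ⬝ᵥ (fun k => v k j) = N i j := by
    intro i j
    simp [hv, dotProduct, vecMulVec_apply, Matrix.sum_apply]
  refine ⟨d, fun i k => v k i, fun i => ?_, fun i j h => ?_⟩
  · simp [hdot, N]
  · simpa [hdot, N, G.ne_of_adj h] using hadj i j h

lemma one_le_of_isVecColoring [Nonempty V] {t : ℝ} {d : ℕ} {p : V → Fin d → ℝ}
    (hp : IsVecColoring G t p) : 1 ≤ t := by
  have h := hp.1 (Classical.arbitrary V)
  have : 0 ≤ p (Classical.arbitrary V) ⬝ᵥ p (Classical.arbitrary V) :=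
    Finset.sum_nonneg fun k _ => mul_self_nonneg _
  linarith

lemma exists_isVecColoring_maxDegree_add_one [DecidableRel G.Adj] :
    ∃ (d : ℕ) (p : V → Fin d → ℝ), IsVecColoring G (G.maxDegree + 1) p := by
  classical
  refine exists_isVecColoring_of_posSemidef (G.posSemidef_lapMatrix ℝ) (fun i => ?_)
    fun i j h => ?_
  · simpa [SimpleGraph.lapMatrix, SimpleGraph.degMatrix] using G.degree_le_maxDegree i
  · simp [SimpleGraph.lapMatrix, SimpleGraph.degMatrix, h, G.ne_of_adj h]

lemma vecChrom_le [Nonempty V] {t : ℝ} {d : ℕ} {p : V → Fin d → ℝ}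
    (hp : IsVecColoring G t p) : vecChrom G ≤ t :=
  csInf_le ⟨1, fun _ h => h.1⟩ ⟨one_le_of_isVecColoring hp, d, p, hp⟩

lemma le_vecChrom {a : ℝ}
    (h : ∀ (t : ℝ) (d : ℕ) (p : V → Fin d → ℝ), IsVecColoring G t p → a ≤ t) :
    a ≤ vecChrom G := by
  classical
  obtain ⟨d, p, hp⟩ := exists_isVecColoring_maxDegree_add_one (G := G)
  exact le_csInf ⟨_, le_add_of_nonneg_left (Nat.cast_nonneg _), d, p, hp⟩
    fun t ⟨_, d, p, hp⟩ => h t d p hp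

end VectorColorings

section WeakDuality

variable {V : Type*} [Fintype V] [DecidableEq V] {G : SimpleGraph V} {A : Matrix V V ℝ}

lemma dotProduct_mulVec_le_of_isVecColoring (hsupp : ∀ i j, ¬ G.Adj i j → A i j = 0)
    (hnn : ∀ i j, 0 ≤ A i j) (hpsd : (1 + A).PosSemidef) {t : ℝ} {d : ℕ}
    {p : V → Fin d → ℝ} (hp : IsVecColoring G t p) {u : V → ℝ} (hu : 0 ≤ u) :
    u ⬝ᵥ ((1 + A) *ᵥ u) ≤ t * (u ⬝ᵥ u) := by
  have hschur := (hpsd.hadamard (posSemidef_gramMat p)).dotProduct_mulVec_nonneg u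
  have hterm : ∀ i j, ((1 + A) ⊙ gramMat p) i j * u i * u j
      ≤ (t • 1 - (1 + A)) i j * u i * u j := by
    intro i j
    have huij : 0 ≤ u i * u j := mul_nonneg (hu i) (hu j)
    rcases eq_or_ne i j with rfl | hij
    · simp [hsupp i i (G.irrefl), gramMat, hp.1 i]
    have hl : ((1 + A) ⊙ gramMat p) i j = A i j * (p i ⬝ᵥ p j) := by simp [hij, gramMat]
    have hr : (t • 1 - (1 + A)) i j = -A i j := by simp [hij]
    rw [hl, hr]
    by_cases hadj : G.Adj i j
    · have hedge : 0 ≤ -(p i ⬝ᵥ p j) - 1 := by linarith [hp.2 i j hadj]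
      nlinarith [mul_nonneg (mul_nonneg (hnn i j) huij) hedge]
    · simp [hsupp i j hadj]
  have hsum : u ⬝ᵥ (((1 + A) ⊙ gramMat p) *ᵥ u) ≤ u ⬝ᵥ ((t • 1 - (1 + A)) *ᵥ u) := by
    simp only [dotProduct_mulVec_eq_sum]
    exact Finset.sum_le_sum fun i _ => Finset.sum_le_sum fun j _ => hterm i j
  rw [star_trivial] at hschur
  simp only [sub_mulVec, smul_mulVec, one_mulVec, dotProduct_sub, dotProduct_smul,
    smul_eq_mul] at hsum
  linarith

lemma IsEigenvalue.le_of_isVecColoring (hsupp : ∀ i j, ¬ G.Adj i j → A i j = 0)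
    (hnn : ∀ i j, 0 ≤ A i j) (hpsd : (1 + A).PosSemidef) {μ : ℝ} (hμ : IsEigenvalue (1 + A) μ)
    {t : ℝ} {d : ℕ} {p : V → Fin d → ℝ} (hp : IsVecColoring G t p) : μ ≤ t := by
  obtain ⟨v, hv, hμv⟩ := hμ
  have habs : |v| ⬝ᵥ |v| = v ⬝ᵥ v := by simp [dotProduct, abs_mul_abs_self]
  have hS : ∀ i j, 0 ≤ (1 + A) i j := fun i j =>
    add_nonneg (by rw [one_apply]; split_ifs <;> norm_num) (hnn i j)
  have h : μ * (v ⬝ᵥ v) ≤ t * (v ⬝ᵥ v) := calc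
    μ * (v ⬝ᵥ v) = v ⬝ᵥ ((1 + A) *ᵥ v) := by rw [hμv, dotProduct_smul, smul_eq_mul]
    _ ≤ |v| ⬝ᵥ ((1 + A) *ᵥ |v|) := dotProduct_mulVec_le_abs hS v
    _ ≤ t * (v ⬝ᵥ v) :=
      habs ▸ dotProduct_mulVec_le_of_isVecColoring hsupp hnn hpsd hp (abs_nonneg v)
  exact le_of_mul_le_mul_right h (by simpa using dotProduct_star_self_pos_iff.2 hv)

end WeakDuality

section RayBounds

variable {E F : Type*} [AddCommGroup E] [Module ℝ E] [FunLike F E ℝ] [LinearMapClass F ℝ E ℝ]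
  (f : F) {x y : E} {c : ℝ}

lemma map_nonneg_of_forall_pos_le (h : ∀ s : ℝ, 0 < s → c ≤ f (x + s • y)) : 0 ≤ f y := by
  simp only [map_add, map_smul, smul_eq_mul] at h
  by_contra! hy
  have h1 := h 1 one_pos
  have h2 := h (2 * (f x - c) / -f y) (div_pos (by linarith) (neg_pos.2 hy))
  have hs : 2 * (f x - c) / -f y * f y = -(2 * (f x - c)) := by field_simp [hy.ne]
  linarith

lemma map_nonpos_of_forall_pos_le (h : ∀ s : ℝ, 0 < s → f (x + s • y) ≤ c) : f y ≤ 0 := by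
  have := map_nonneg_of_forall_pos_le (-(f : E →ₗ[ℝ] ℝ)) (c := -c) fun s hs => by
    simpa using h s hs
  simpa using this

lemma map_le_of_forall_pos_le (h : ∀ s : ℝ, 0 < s → f (x + s • y) ≤ c) : f x ≤ c := by
  simp only [map_add, map_smul, smul_eq_mul] at h
  rcases le_or_gt 0 (f y) with hy | hy
  · linarith [h 1 one_pos]
  · refine le_of_forall_pos_le_add fun ε hε => ?_
    have := h (ε / -f y) (div_pos hε (neg_pos.2 hy))
    rw [div_neg, neg_mul, div_mul_cancel₀ _ hy.ne] at this
    linarith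

lemma map_eq_zero_of_forall_le (h : ∀ s : ℝ, c ≤ f (x + s • y)) : f y = 0 := by
  have hneg := map_nonneg_of_forall_pos_le f (y := -y) fun s _ => by simpa using h (-s)
  have hpos := map_nonneg_of_forall_pos_le f fun s _ => h s
  simp only [map_neg] at hneg
  linarith

end RayBounds

lemma map_prod_eq {E F : Type*} [AddCommGroup E] [Module ℝ E] [FunLike F (ℝ × E) ℝ]
    [LinearMapClass F ℝ (ℝ × E) ℝ] (f : F) (t : ℝ) (w : E) :
    f (t, w) = t * f (1, 0) + f (0, w) := by
  rw [← smul_eq_mul, ← map_smul, ← map_add]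
  simp

section StrongDuality

variable {V : Type*}

@[simp]
lemma allOnes_apply (i j : V) : allOnes V i j = 1 := rfl

def lowerOrthant (V : Type*) (τ : ℝ) : Set (ℝ × Matrix V V ℝ) :=
  Set.Iio τ ×ˢ {W | ∀ i j, W i j < 0}

lemma convex_lowerOrthant (τ : ℝ) : Convex ℝ (lowerOrthant V τ) :=
  (convex_Iio τ).prod fun _ hW _ hW' _ _ ha hb hab i j =>
    convex_Iio (0 : ℝ) (hW i j) (hW' i j) ha hb hab

lemma isOpen_lowerOrthant [Finite V] (τ : ℝ) : IsOpen (lowerOrthant V τ) := by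
  refine isOpen_Iio.prod ?_
  simp only [Set.ofPred_forall]
  exact isOpen_iInter_of_finite fun i => isOpen_iInter_of_finite fun j =>
    isOpen_lt (continuous_id.matrix_elem i j) continuous_const

/-- Pairs `(t, W)` where `W` bounds the residuals of the constraints `M i i ≤ t - 1` and
`M i j ≤ -1` (on edges) of a vector `t`-coloring with positive semidefinite Gram matrix `M`. -/
def residualSet (G : SimpleGraph V) : Set (ℝ × Matrix V V ℝ) :=
  {q | ∃ M : Matrix V V ℝ, M.PosSemidef ∧ (∀ i, M i i + 1 - q.1 ≤ q.2 i i) ∧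
    ∀ i j, G.Adj i j → M i j + 1 ≤ q.2 i j}

lemma convex_residualSet {G : SimpleGraph V} : Convex ℝ (residualSet G) := by
  rintro ⟨t, W⟩ ⟨M, hM, hMd, hMa⟩ ⟨t', W'⟩ ⟨M', hM', hMd', hMa'⟩ a b ha hb hab
  refine ⟨a • M + b • M', (hM.smul ha).add (hM'.smul hb), fun i => ?_, fun i j h => ?_⟩
  · have := add_le_add (mul_le_mul_of_nonneg_left (hMd i) ha)
      (mul_le_mul_of_nonneg_left (hMd' i) hb)
    simp only [Matrix.add_apply, Matrix.smul_apply, Prod.fst_add, Prod.snd_add, Prod.smul_fst,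
      Prod.smul_snd, smul_eq_mul] at this ⊢
    linarith
  · have := add_le_add (mul_le_mul_of_nonneg_left (hMa i j h) ha)
      (mul_le_mul_of_nonneg_left (hMa' i j h) hb)
    simp only [Matrix.add_apply, Matrix.smul_apply, Prod.snd_add, Prod.smul_snd,
      smul_eq_mul] at this ⊢
    linarith

lemma disjoint_lowerOrthant_residualSet [Fintype V] [Nonempty V] {G : SimpleGraph V} :
    Disjoint (lowerOrthant V (vecChrom G)) (residualSet G) := by
  refine Set.disjoint_left.2 fun ⟨t, W⟩ ⟨ht, hW⟩ ⟨M, hM, hMd, hMa⟩ => ?_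
  obtain ⟨d, p, hp⟩ := exists_isVecColoring_of_posSemidef (G := G) (t := t) hM
    (fun i => by linarith [hMd i, hW i i]) (fun i j h => by linarith [hMa i j h, hW i j])
  exact (not_le.2 ht) (vecChrom_le hp)

section SeparatingFunctional

variable {F : Type*} [FunLike F (ℝ × Matrix V V ℝ) ℝ] [LinearMapClass F ℝ (ℝ × Matrix V V ℝ) ℝ]
  (f : F) {c τ : ℝ}

lemma map_le_of_lowerOrthant (hO : ∀ q ∈ lowerOrthant V τ, f q < c) : f (τ, 0) ≤ c :=
  map_le_of_forall_pos_le f (y := (-1, -allOnes V)) fun s hs =>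
    (hO _ ⟨by simpa using hs, fun i j => by simpa using hs⟩).le

lemma map_zero_single_nonneg [DecidableEq V] (hO : ∀ q ∈ lowerOrthant V τ, f q < c) (a b : V) :
    0 ≤ f (0, single a b 1) := by
  have hsingle : ∀ i j, 0 ≤ single a b (1 : ℝ) i j := fun i j => by
    rw [single_apply]
    split_ifs <;> norm_num
  have := map_nonpos_of_forall_pos_le f (x := (τ - 1, -allOnes V)) (y := -(0, single a b 1))
    fun s hs => (hO _ ⟨by simp, fun i j => by
      have := mul_nonneg hs.le (hsingle i j)
      simp only [Prod.snd_add, Prod.smul_snd, Prod.snd_neg, Matrix.add_apply, Matrix.neg_apply,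
        Matrix.smul_apply, smul_eq_mul, allOnes_apply]
      linarith⟩).le
  simpa only [map_neg, neg_nonpos] using this

lemma map_zero_prod_eq_sum [Fintype V] [DecidableEq V] (W : Matrix V V ℝ) :
    f (0, W) = ∑ i, ∑ j, W i j * f (0, single i j 1) := by
  have hW : ((0 : ℝ), W) = ∑ i, ∑ j, W i j • ((0 : ℝ), single i j (1 : ℝ)) := by
    conv_lhs => rw [matrix_eq_sum_single W]
    ext <;> simp [Prod.fst_sum, Prod.snd_sum, smul_single]
  rw [hW, map_sum]
  simp only [map_sum, map_smul, smul_eq_mul]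

variable {G : SimpleGraph V}

lemma map_zero_single_eq_zero [DecidableEq V] (hS : ∀ q ∈ residualSet G, c ≤ f q) {a b : V}
    (hab : a ≠ b) (hadj : ¬ G.Adj a b) : f (0, single a b 1) = 0 := by
  have hzero : ∀ (s : ℝ) i j, (i = j ∨ G.Adj i j) → single a b s i j = 0 := by
    rintro s i j hij
    rw [single_apply, if_neg]
    rintro ⟨rfl, rfl⟩
    exact hij.elim hab hadj
  exact map_eq_zero_of_forall_le f (x := (0, allOnes V)) fun s => hS _ ⟨0, .zero,
    fun i => by simp [hzero s i i (Or.inl rfl)], fun i j h => by simp [hzero s i j (Or.inr h)]⟩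

lemma map_one_zero_eq [DecidableEq V] (hS : ∀ q ∈ residualSet G, c ≤ f q) :
    f (1, 0) = f (0, 1) := by
  have h := map_eq_zero_of_forall_le f (x := (0, allOnes V)) (y := (1, 0) - (0, 1)) fun s =>
    hS _ ⟨0, .zero, fun i => by simp [sub_eq_add_neg], fun i j h => by simp [G.ne_of_adj h]⟩
  rw [map_sub] at h
  linarith

lemma map_zero_nonneg_of_posSemidef (hS : ∀ q ∈ residualSet G, c ≤ f q) {M : Matrix V V ℝ}
    (hM : M.PosSemidef) : 0 ≤ f (0, M) :=
  map_nonneg_of_forall_pos_le f (x := (0, allOnes V)) fun s hs =>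
    hS _ ⟨s • M, hM.smul hs.le, fun i => by simp [add_comm], fun i j _ => by simp [add_comm]⟩

lemma map_one_zero_pos [Fintype V] [Nonempty V] (hO : ∀ q ∈ lowerOrthant V (vecChrom G), f q < c)
    (hS : ∀ q ∈ residualSet G, c ≤ f q) : 0 < f (1, 0) := by
  classical
  obtain ⟨d, p, hp⟩ := exists_isVecColoring_maxDegree_add_one (G := G)
  set t₀ : ℝ := G.maxDegree + 1
  have hgram : ∀ i j, ((2 : ℝ) • gramMat p) i j = 2 * (p i ⬝ᵥ p j) := fun _ _ => rfl
  -- doubling the Gram matrix of a vector `t₀`-coloring leaves slack `1` in every constraint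
  have hmem : (2 * t₀, -allOnes V) ∈ residualSet G :=
    ⟨(2 : ℝ) • gramMat p, (posSemidef_gramMat p).smul zero_le_two,
      fun i => by simp only [hgram, hp.1 i, Matrix.neg_apply, allOnes_apply]; linarith,
      fun i j h => by simp only [hgram, Matrix.neg_apply, allOnes_apply]; linarith [hp.2 i j h]⟩
  have hlt := hO (vecChrom G - 1, -allOnes V) ⟨by simp, fun i j => by simp⟩
  have hle := hS _ hmem
  rw [map_prod_eq] at hlt hle
  have ht₀ : 0 ≤ t₀ := by positivity
  have hcoef : 0 < 2 * t₀ - (vecChrom G - 1) := by linarith [vecChrom_le hp]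
  exact pos_of_mul_pos_right (by linarith : 0 < (2 * t₀ - (vecChrom G - 1)) * f (1, 0)) hcoef.le

end SeparatingFunctional

lemma exists_dual_certificate [Fintype V] [Nonempty V] (G : SimpleGraph V) :
    ∃ z : Matrix V V ℝ, (∀ i j, 0 ≤ z i j) ∧ (∀ i j, i ≠ j → ¬ G.Adj i j → z i j = 0) ∧
      (∀ x : V → ℝ, 0 ≤ x ⬝ᵥ (z *ᵥ x)) ∧ 0 < z.trace ∧
      z.trace * vecChrom G ≤ ∑ i, ∑ j, z i j := by
  classical
  obtain ⟨f, c, hO, hS⟩ := geometric_hahn_banach_open (convex_lowerOrthant _)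
    (isOpen_lowerOrthant _) convex_residualSet (disjoint_lowerOrthant_residualSet (G := G))
  set z : Matrix V V ℝ := of fun i j => f (0, single i j 1)
  have hz : ∀ W : Matrix V V ℝ, f (0, W) = ∑ i, ∑ j, W i j * z i j := map_zero_prod_eq_sum f
  have htrace : f (1, 0) = z.trace := by
    rw [map_one_zero_eq f hS, hz]
    simp [one_apply, trace]
  refine ⟨z, fun i j => map_zero_single_nonneg f hO i j,
    fun i j hij hadj => map_zero_single_eq_zero f hS hij hadj, fun x => ?_,
    htrace ▸ map_one_zero_pos f hO hS, ?_⟩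
  · have := map_zero_nonneg_of_posSemidef f hS (posSemidef_vecMulVec_self_star x)
    rw [hz] at this
    rw [dotProduct_mulVec_eq_sum]
    simpa [vecMulVec_apply, mul_comm, mul_left_comm, mul_assoc] using this
  · have hτ := map_le_of_lowerOrthant f hO
    have hJ : c ≤ f (0, allOnes V) := hS _ ⟨0, .zero, fun i => by simp, fun i j _ => by simp⟩
    rw [map_prod_eq, htrace] at hτ
    rw [hz] at hJ
    simp only [Prod.mk_zero_zero, map_zero, add_zero] at hτ
    simp only [allOnes_apply, one_mul] at hJ
    linarith

end StrongDuality

section DualSolutions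

variable {V : Type*} [Fintype V] {G : SimpleGraph V}

lemma isDualSol_smul_add_transpose {z : Matrix V V ℝ} (hnn : ∀ i j, 0 ≤ z i j)
    (hzero : ∀ i j, i ≠ j → ¬ G.Adj i j → z i j = 0) (hpsd : ∀ x : V → ℝ, 0 ≤ x ⬝ᵥ (z *ᵥ x))
    (htr : 0 < z.trace) : IsDualSol G ((2 * z.trace)⁻¹ • (z + zᵀ)) := by
  have hsym : (z + zᵀ).PosSemidef := by
    refine .of_dotProduct_mulVec_nonneg ?_ fun x => ?_
    · simp [IsHermitian, add_comm]
    · have : x ⬝ᵥ (zᵀ *ᵥ x) = x ⬝ᵥ (z *ᵥ x) := by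
        rw [mulVec_transpose, dotProduct_comm, dotProduct_mulVec]
      rw [star_trivial, add_mulVec, dotProduct_add, this]
      linarith [hpsd x]
  refine ⟨hsym.smul (by positivity), fun i j hij hadj => ?_, fun i j => ?_, ?_⟩
  · simp [hzero i j hij hadj, hzero j i hij.symm fun h => hadj h.symm]
  · exact mul_nonneg (by positivity) (add_nonneg (hnn i j) (hnn j i))
  · rw [trace_smul, trace_add, trace_transpose, smul_eq_mul]
    field_simp
    ring

theorem exists_isDualSol_vecChrom_le_sum [Nonempty V] (G : SimpleGraph V) :
    ∃ B : Matrix V V ℝ, IsDualSol G B ∧ vecChrom G ≤ ∑ i, ∑ j, B i j := by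
  obtain ⟨z, hnn, hzero, hpsd, htr, hle⟩ := exists_dual_certificate G
  refine ⟨_, isDualSol_smul_add_transpose hnn hzero hpsd htr, ?_⟩
  have hsum : ∑ i, ∑ j, ((2 * z.trace)⁻¹ • (z + zᵀ)) i j = (∑ i, ∑ j, z i j) / z.trace := by
    simp only [Matrix.smul_apply, Matrix.add_apply, transpose_apply, smul_eq_mul, ← Finset.mul_sum,
      Finset.sum_add_distrib]
    rw [Finset.sum_comm (f := fun i j => z j i)]
    field_simp
    ring
  rw [hsum, le_div_iff₀ htr]
  linarith

end DualSolutions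

section Normalization

variable {V : Type*} [DecidableEq V] {B : Matrix V V ℝ}

/-- The off-diagonal part of `D * B * D`, where `D` is the diagonal matrix of the `(B i i)^(-1/2)`;
where `B i i = 0` the division yields `0`, and for positive semidefinite `B` that row of `B`
vanishes anyway. -/
noncomputable def offDiagNormalize (B : Matrix V V ℝ) : Matrix V V ℝ :=
  of fun i j => if i = j then 0 else B i j / (√(B i i) * √(B j j))

lemma offDiagNormalize_isSymm (hB : B.IsSymm) : (offDiagNormalize B).IsSymm := by
  ext i j
  simp only [offDiagNormalize, transpose_apply, of_apply, eq_comm (a := j), hB.apply i j, mul_comm]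

lemma offDiagNormalize_eq_zero_of_not_adj {G : SimpleGraph V}
    (hB : ∀ i j, i ≠ j → ¬ G.Adj i j → B i j = 0) {i j : V} (h : ¬ G.Adj i j) :
    offDiagNormalize B i j = 0 := by
  rcases eq_or_ne i j with rfl | hij
  · simp [offDiagNormalize]
  · simp [offDiagNormalize, hij, hB i j hij h]

lemma offDiagNormalize_nonneg (hB : ∀ i j, 0 ≤ B i j) (i j : V) : 0 ≤ offDiagNormalize B i j := by
  simp only [offDiagNormalize, of_apply]
  split_ifs
  exacts [le_rfl, div_nonneg (hB i j) (by positivity)]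

variable [Fintype V]

lemma posSemidef_one_add_offDiagNormalize (hB : B.PosSemidef) :
    (1 + offDiagNormalize B).PosSemidef := by
  set D : Matrix V V ℝ := diagonal fun i => (√(B i i))⁻¹
  have hD : ∀ i j, (Dᴴ * B * D) i j = B i j / (√(B i i) * √(B j j)) := fun i j => by
    simp only [D, conjTranspose_eq_transpose_of_trivial, diagonal_transpose, mul_diagonal,
      diagonal_mul]
    ring
  have h : 1 + offDiagNormalize B = Dᴴ * B * D + diagonal fun i => if B i i = 0 then 1 else 0 := by
    ext i j
    rw [Matrix.add_apply (Dᴴ * B * D), hD]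
    rcases eq_or_ne i j with rfl | hij
    · by_cases h0 : B i i = 0
      · simp [offDiagNormalize, h0]
      · simp [offDiagNormalize, h0, Real.mul_self_sqrt hB.diag_nonneg]
    · simp [offDiagNormalize, hij]
  rw [h]
  exact (hB.conjTranspose_mul_mul_same D).add (PosSemidef.diagonal fun i => by
    dsimp only; split_ifs <;> norm_num)

lemma sqrt_diag_dotProduct_one_add_offDiagNormalize (hB : B.PosSemidef) :
    (fun i => √(B i i)) ⬝ᵥ ((1 + offDiagNormalize B) *ᵥ fun i => √(B i i)) = ∑ i, ∑ j, B i j := by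
  rw [dotProduct_mulVec_eq_sum]
  refine Finset.sum_congr rfl fun i _ => Finset.sum_congr rfl fun j _ => ?_
  rcases eq_or_ne i j with rfl | hij
  · simp [offDiagNormalize, Real.mul_self_sqrt hB.diag_nonneg]
  · simp only [offDiagNormalize, Matrix.add_apply, one_apply_ne hij, of_apply, if_neg hij,
      zero_add, mul_assoc]
    refine div_mul_cancel_of_imp fun h => ?_
    rcases mul_eq_zero.1 h with h | h
    · rw [← hB.1.apply, star_trivial]
      exact hB.apply_eq_zero_of_diag_eq_zero (Real.sqrt_eq_zero hB.diag_nonneg |>.1 h) j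
    · exact hB.apply_eq_zero_of_diag_eq_zero (Real.sqrt_eq_zero hB.diag_nonneg |>.1 h) i

end Normalization

/-- `χ_v(G)` equals the maximum, over symmetric real matrices `A`
supported on the edges of `G`, with nonnegative entries and `I + A` positive
semidefinite, of the largest eigenvalue of `I + A`. -/
theorem vecChrom_eq_max_eigenvalue {V : Type*} [Fintype V] [DecidableEq V] [Nonempty V]
    (G : SimpleGraph V) :
    IsGreatest {lam : ℝ | ∃ A : Matrix V V ℝ, A.IsSymm ∧
        (∀ i j, ¬ G.Adj i j → A i j = 0) ∧ (∀ i j, 0 ≤ A i j) ∧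
        ((1 : Matrix V V ℝ) + A).PosSemidef ∧ IsMaxEigenvalue (1 + A) lam}
      (vecChrom G) := by
  have hweak : ∀ {A : Matrix V V ℝ} {lam : ℝ}, (∀ i j, ¬ G.Adj i j → A i j = 0) →
      (∀ i j, 0 ≤ A i j) → (1 + A).PosSemidef → IsMaxEigenvalue (1 + A) lam →
      lam ≤ vecChrom G := fun hsupp hnn hpsd hlam =>
    le_vecChrom fun _ _ _ hp => hlam.1.le_of_isVecColoring hsupp hnn hpsd hp
  refine ⟨?_, fun lam ⟨A, _, hsupp, hnn, hpsd, hlam⟩ => hweak hsupp hnn hpsd hlam⟩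
  obtain ⟨B, ⟨hBpsd, hBsupp, hBnn, hBtr⟩, hle⟩ := exists_isDualSol_vecChrom_le_sum G
  have hsupp : ∀ i j, ¬ G.Adj i j → offDiagNormalize B i j = 0 := fun _ _ =>
    offDiagNormalize_eq_zero_of_not_adj hBsupp
  have hpsd := posSemidef_one_add_offDiagNormalize hBpsd
  obtain ⟨lam, hlam, hray⟩ := hpsd.1.exists_isMaxEigenvalue
  have hunit : (fun i => √(B i i)) ⬝ᵥ (fun i => √(B i i)) = 1 := by
    simpa [dotProduct, Real.mul_self_sqrt hBpsd.diag_nonneg, trace] using hBtr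
  have hlow : vecChrom G ≤ lam := by
    have := hray fun i => √(B i i)
    rw [sqrt_diag_dotProduct_one_add_offDiagNormalize hBpsd, hunit, mul_one] at this
    exact hle.trans this
  have heq : lam = vecChrom G :=
    le_antisymm (hweak hsupp (offDiagNormalize_nonneg hBnn) hpsd hlam) hlow
  exact ⟨_, offDiagNormalize_isSymm (isHermitian_iff_isSymm.1 hBpsd.1), hsupp,
    offDiagNormalize_nonneg hBnn, hpsd, heq ▸ hlam⟩
end

section
/- Let G and H be finite simple graphs with χ_v(G) = χ_v(H), let p and q be optimal vector colorings of G and H respectively, and let w be the optimal vector coloring of G × H given by w_{(i,ℓ)} = (1/√2)(p_i ⊕ q_ℓ) for i ∈ V(G), ℓ ∈ V(H), where ⊕ denotes the direct sum (concatenation) of vectors. If i →_p j and ℓ →_q k, then (i,ℓ) →_w (j,k). -/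
open Matrix Kronecker

/-! If `-p i = ∑ α m • p m` and `-q l = ∑ β n • q n` over tight neighbours, pairing with `p i`
(resp. `q l`) shows `∑ α = χ_v - 1 = ∑ β`. Hence the product weights `α m * β n / (χ_v - 1)`
express `-w (i, l)` through the `w (m, n)`, and each such pair `(m, n)` is tight for `w` since
`w (i, l) ⬝ᵥ w (m, n) = (p i ⬝ᵥ p m + q l ⬝ᵥ q n) / 2 = -1`. -/

theorem Fin.append_dotProduct_append {m n : ℕ} (u u' : Fin m → ℝ) (v v' : Fin n → ℝ) :
    Fin.append u v ⬝ᵥ Fin.append u' v' = u ⬝ᵥ u' + v ⬝ᵥ v' := by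
  simp [dotProduct, Fin.sum_univ_add]

theorem sum_sum_mul_div_mul_of_sum_eq {ι κ : Type*} [Fintype ι] [Fintype κ] {a : ι → ℝ}
    {b : κ → ℝ} {s : ℝ} (hs : s ≠ 0) (hb : ∑ y, b y = s) (f : ι → ℝ) :
    ∑ x, ∑ y, a x * b y / s * f x = ∑ x, a x * f x := by
  refine Finset.sum_congr rfl fun x _ => ?_
  rw [← Finset.sum_mul, ← Finset.sum_div, ← Finset.mul_sum, hb, mul_div_cancel_right₀ _ hs]

theorem Fin.neg_append_eq_sum_smul_append {ι κ : Type*} [Fintype ι] [Fintype κ] {m n : ℕ}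
    {u : Fin m → ℝ} {v : Fin n → ℝ} {us : ι → Fin m → ℝ} {vs : κ → Fin n → ℝ}
    {a : ι → ℝ} {b : κ → ℝ} {s : ℝ} (hs : s ≠ 0) (ha : ∑ x, a x = s) (hb : ∑ y, b y = s)
    (hu : -u = ∑ x, a x • us x) (hv : -v = ∑ y, b y • vs y) :
    -Fin.append u v = ∑ z : ι × κ, (a z.1 * b z.2 / s) • Fin.append (us z.1) (vs z.2) := by
  ext r
  simp only [Pi.neg_apply, Finset.sum_apply, Pi.smul_apply, smul_eq_mul, Fintype.sum_prod_type]
  induction r using Fin.addCases with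
  | left r =>
    simpa only [Fin.append_left, sum_sum_mul_div_mul_of_sum_eq hs hb, Pi.neg_apply,
      Finset.sum_apply, Pi.smul_apply, smul_eq_mul] using congrFun hu r
  | right r =>
    rw [Finset.sum_comm]
    simpa only [Fin.append_right, mul_comm (a _), sum_sum_mul_div_mul_of_sum_eq hs ha,
      Pi.neg_apply, Finset.sum_apply, Pi.smul_apply, smul_eq_mul] using congrFun hv r

theorem sum_coeff_eq_dotProduct_self {V : Type*} [Fintype V] {d : ℕ} {p : V → Fin d → ℝ} {i : V}
    {c : V → ℝ} (htight : ∀ l, c l ≠ 0 → p i ⬝ᵥ p l = -1)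
    (hsum : -p i = ∑ l, c l • p l) : ∑ l, c l = p i ⬝ᵥ p i := by
  have hterm : ∀ l, p i ⬝ᵥ (c l • p l) = -c l := fun l => by
    by_cases hl : c l = 0
    · simp [hl]
    · rw [dotProduct_smul, htight l hl, smul_eq_mul, mul_neg_one]
  have := congrArg (p i ⬝ᵥ ·) hsum
  simp only [dotProduct_neg, dotProduct_sum, hterm, Finset.sum_neg_distrib, neg_inj] at this
  exact this.symm

/-- If `p`, `q` are optimal vector colorings of `G`, `H` (with
`χ_v(G) = χ_v(H)`) and `w (i,ℓ) = (1/√2) (pᵢ ⊕ q_ℓ)` is the direct-sum optimal vector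
coloring of `G × H`, then `i →_p j` and `ℓ →_q k` imply `(i,ℓ) →_w (j,k)`. -/
theorem arrowIn_catProd {α β : Type*} [Fintype α] [Fintype β]
    (G : SimpleGraph α) (H : SimpleGraph β) (h : vecChrom G = vecChrom H)
    {d1 d2 : ℕ} (p : α → Fin d1 → ℝ) (q : β → Fin d2 → ℝ)
    (hp : IsVecColoring G (vecChrom G) p) (hq : IsVecColoring H (vecChrom H) q)
    (w : α × β → Fin (d1 + d2) → ℝ)
    (hw : ∀ x : α × β, w x = (Real.sqrt 2)⁻¹ • Fin.append (p x.1) (q x.2))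
    (i j : α) (l k : β) (hij : ArrowIn G p i j) (hlk : ArrowIn H q l k) :
    ArrowIn (catProd G H) w (i, l) (j, k) := by
  obtain ⟨a, ha0, ha_tight, haj, ha_sum⟩ := hij
  obtain ⟨b, hb0, hb_tight, hbk, hb_sum⟩ := hlk
  have ha : ∑ m, a m = vecChrom G - 1 :=
    (sum_coeff_eq_dotProduct_self (fun m hm => (ha_tight m hm).2) ha_sum).trans (hp.1 i)
  have hb : ∑ n, b n = vecChrom G - 1 := by
    rw [sum_coeff_eq_dotProduct_self (fun n hn => (hb_tight n hn).2) hb_sum, hq.1 l, h]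
  have hs : 0 < vecChrom G - 1 :=
    ha ▸ haj.trans_le (Finset.single_le_sum (fun m _ => ha0 m) (Finset.mem_univ j))
  have hdot : ∀ x y, w x ⬝ᵥ w y = (p x.1 ⬝ᵥ p y.1 + q x.2 ⬝ᵥ q y.2) / 2 := fun x y => by
    rw [hw, hw, smul_dotProduct, dotProduct_smul, Fin.append_dotProduct_append, smul_eq_mul,
      smul_eq_mul, ← mul_assoc, ← mul_inv, Real.mul_self_sqrt zero_le_two, inv_mul_eq_div]
  refine ⟨fun x => a x.1 * b x.2 / (vecChrom G - 1),
    fun x => div_nonneg (mul_nonneg (ha0 _) (hb0 _)) hs.le, fun x hx => ?_,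
    div_pos (mul_pos haj hbk) hs, ?_⟩
  · obtain ⟨hm, hn⟩ := mul_ne_zero_iff.mp (div_ne_zero_iff.mp hx).1
    refine ⟨⟨(ha_tight _ hm).1, (hb_tight _ hn).1⟩, ?_⟩
    rw [hdot, (ha_tight _ hm).2, (hb_tight _ hn).2]
    norm_num
  · simp only [hw, smul_comm _ (Real.sqrt 2)⁻¹, ← Finset.smul_sum,
      ← Fin.neg_append_eq_sum_smul_append hs.ne' ha hb ha_sum hb_sum, smul_neg]
end
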